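/- Let f : ℤ² → {contact elements} be a discrete Dupin cyclide such that for every n ∈ ℤ the subspace span{s⁻(m,n) : m ∈ ℤ} is 3-dimensional. Then there exists a single Dupin cyclide (D⁺, D⁻) such that s⁺(m,n) ⊆ D⁺ and s⁻(m,n) ⊆ D⁻ for all m, n ∈ ℤ, and the constant assignment of (D⁺, D⁻) to every face is a face-cyclide congruence for f. (The two curvature sphere congruences of a discrete Dupin cyclide lie in two fixed orthogonal (2,1)-planes of ℝ^{4,2}, and its Lie cyclide congruence is constant.) -/

import Mathlib

/-!
At a vertex, the contact element is spanned by its two curvature spheres, which lie in the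
complementary planes `D` and `E` of an adjacent face cyclide; by the modular law the contact
element meets `E` exactly in its `s⁻` sphere (and `D` in its `s⁺` sphere). If the face cyclides
do not change along one lattice direction, this forces the corresponding curvature spheres to
stay constant along it. Hence all `s⁻` lie in one fixed `E`, which they span by the dimension
hypothesis, and each `s⁺`, being orthogonal to every `s⁻` of its row, lies in `E^⊥ = D`.
-/

noncomputable section

/-- The Lie sphere geometric model: `ℝ^{4,2}`. -/
abbrev V6 : Type := Fin 6 → ℝ

/-- The symmetric bilinear form of signature `(4,2)` on `V6`. -/
def B (x y : V6) : ℝ :=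
  x 0 * y 0 + x 1 * y 1 + x 2 * y 2 + x 3 * y 3 - x 4 * y 4 - x 5 * y 5

/-- An oriented sphere: a 1-dimensional isotropic subspace. -/
def IsSphere (S : Submodule ℝ V6) : Prop :=
  Module.finrank ℝ S = 1 ∧ ∀ x ∈ S, B x x = 0

/-- A contact element: a 2-dimensional totally isotropic subspace. -/
def IsContact (W : Submodule ℝ V6) : Prop :=
  Module.finrank ℝ W = 2 ∧ ∀ x ∈ W, ∀ y ∈ W, B x y = 0

/-- A `(2,1)`-plane: 3-dim subspace on which the form is nondegenerate of signature `(2,1)`. -/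
def IsSig21 (D : Submodule ℝ V6) : Prop :=
  ∃ u v w : V6, D = Submodule.span ℝ {u, v, w} ∧
    B u u = 1 ∧ B v v = 1 ∧ B w w = -1 ∧ B u v = 0 ∧ B u w = 0 ∧ B v w = 0

/-- A Dupin cyclide: a pair of `(2,1)`-planes, the second the orthogonal complement of the first. -/
def IsDupin (D E : Submodule ℝ V6) : Prop :=
  IsSig21 D ∧ IsSig21 E ∧ ∀ x : V6, x ∈ E ↔ ∀ y ∈ D, B x y = 0

/-- Horizontal curvature sphere on the edge from `(m,n)` to `(m+1,n)`. -/
def sPlus (f : ℤ × ℤ → Submodule ℝ V6) (m n : ℤ) : Submodule ℝ V6 :=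
  f (m, n) ⊓ f (m + 1, n)

/-- Vertical curvature sphere on the edge from `(m,n)` to `(m,n+1)`. -/
def sMinus (f : ℤ × ℤ → Submodule ℝ V6) (m n : ℤ) : Submodule ℝ V6 :=
  f (m, n) ⊓ f (m, n + 1)

/-- A discrete Legendre map. -/
def IsLegendre (f : ℤ × ℤ → Submodule ℝ V6) : Prop :=
  (∀ p : ℤ × ℤ, IsContact (f p)) ∧
  (∀ m n : ℤ, Module.finrank ℝ (sPlus f m n) = 1) ∧
  (∀ m n : ℤ, Module.finrank ℝ (sMinus f m n) = 1)

/-- A face-cyclide congruence for `f`. -/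
def IsFaceCyclideCongruence (f D E : ℤ × ℤ → Submodule ℝ V6) : Prop :=
  ∀ m n : ℤ,
    IsDupin (D (m, n)) (E (m, n)) ∧
    sPlus f m n ≤ D (m, n) ∧ sPlus f m (n + 1) ≤ D (m, n) ∧
    sMinus f m n ≤ E (m, n) ∧ sMinus f (m + 1) n ≤ E (m, n)

/-- A discrete channel surface with circular direction `+`. -/
def IsChannelPlus (f : ℤ × ℤ → Submodule ℝ V6) : Prop :=
  IsLegendre f ∧
  ∃ D E : ℤ × ℤ → Submodule ℝ V6,
    IsFaceCyclideCongruence f D E ∧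
    ∀ m m' n : ℤ, D (m, n) = D (m', n) ∧ E (m, n) = E (m', n)

/-- The orthogonal complement of a point sphere complex `p`. -/
def pPerp (p : V6) : Submodule ℝ V6 where
  carrier := {x | B x p = 0}
  add_mem' := by
    intro a b ha hb
    simp only [Set.mem_setOf_eq, B, Pi.add_apply] at *
    linear_combination ha + hb
  zero_mem' := by simp [B]
  smul_mem' := by
    intro c x hx
    simp only [Set.mem_setOf_eq, B, Pi.smul_apply, smul_eq_mul] at *
    linear_combination c * hx

/-- A discrete channel surface with circular direction `−`. -/
def IsChannelMinus (f : ℤ × ℤ → Submodule ℝ V6) : Prop :=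
  IsLegendre f ∧
  ∃ D E : ℤ × ℤ → Submodule ℝ V6,
    IsFaceCyclideCongruence f D E ∧
    ∀ m n n' : ℤ, D (m, n) = D (m, n') ∧ E (m, n) = E (m, n')

/-- A discrete Dupin cyclide: a discrete channel surface with respect to both directions. -/
def IsDiscreteDupin (f : ℤ × ℤ → Submodule ℝ V6) : Prop :=
  IsChannelPlus f ∧ IsChannelMinus f


open Module

lemma Matrix.range_cons_cons_cons_empty {α : Type*} (x y z : α) (u : Fin 0 → α) :
    Set.range (Matrix.vecCons x <| Matrix.vecCons y <| Matrix.vecCons z u) = {x, y, z} := by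
  rw [Matrix.range_cons, Matrix.range_cons_cons_empty, Set.singleton_union]

lemma B_symm (x y : V6) : B x y = B y x := by
  simp only [B]; ring

lemma B_sub_left (x y z : V6) : B (x - y) z = B x z - B y z := by
  simp only [B, Pi.sub_apply]; ring

lemma B_zero_left (y : V6) : B 0 y = 0 := by
  simp [B]

lemma B_sum_fin_three_left (g : Fin 3 → ℝ) (u v w t : V6) :
    B (∑ i, g i • ![u, v, w] i) t = g 0 * B u t + g 1 * B v t + g 2 * B w t := by
  simp only [Fin.sum_univ_three, B, Matrix.cons_val, Pi.add_apply, Pi.smul_apply, smul_eq_mul]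
  ring

lemma eq_zero_of_B_sum_eq_zero {u v w : V6} (hu : B u u ≠ 0) (hv : B v v ≠ 0) (hw : B w w ≠ 0)
    (huv : B u v = 0) (huw : B u w = 0) (hvw : B v w = 0) {g : Fin 3 → ℝ}
    (h : ∀ t ∈ ({u, v, w} : Set V6), B (∑ i, g i • ![u, v, w] i) t = 0) : g = 0 := by
  have hgu := h u (by simp)
  have hgv := h v (by simp)
  have hgw := h w (by simp)
  simp only [B_sum_fin_three_left, B_symm v u, B_symm w u, B_symm w v, huv, huw, hvw, mul_zero,
    add_zero, zero_add, mul_eq_zero] at hgu hgv hgw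
  ext i
  fin_cases i
  exacts [hgu.resolve_right hu, hgv.resolve_right hv, hgw.resolve_right hw]

namespace IsSig21

variable {D : Submodule ℝ V6}

lemma finrank_eq (h : IsSig21 D) : finrank ℝ D = 3 := by
  obtain ⟨u, v, w, rfl, huu, hvv, hww, huv, huw, hvw⟩ := h
  have hli : LinearIndependent ℝ ![u, v, w] := by
    refine Fintype.linearIndependent_iff.2 fun g hg => congrFun ?_
    refine eq_zero_of_B_sum_eq_zero (by simp [huu]) (by simp [hvv]) (by simp [hww]) huv huw hvw
      fun t _ => ?_
    rw [hg, B_zero_left]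
  rw [← Matrix.range_cons_cons_cons_empty u v w ![], finrank_span_eq_card hli, Fintype.card_fin]

lemma eq_zero_of_forall_B_eq_zero (h : IsSig21 D) {x : V6} (hx : x ∈ D)
    (hperp : ∀ y ∈ D, B x y = 0) : x = 0 := by
  obtain ⟨u, v, w, rfl, huu, hvv, hww, huv, huw, hvw⟩ := h
  rw [← Matrix.range_cons_cons_cons_empty u v w ![]] at hx
  obtain ⟨g, rfl⟩ := (Submodule.mem_span_range_iff_exists_fun ℝ).1 hx
  have hg : g = 0 :=
    eq_zero_of_B_sum_eq_zero (by simp [huu]) (by simp [hvv]) (by simp [hww]) huv huw hvw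
      fun t ht => hperp t (Submodule.subset_span ht)
  simp [hg]

end IsSig21

namespace IsDupin

variable {D E : Submodule ℝ V6}

lemma B_eq_zero (h : IsDupin D E) {x y : V6} (hx : x ∈ E) (hy : y ∈ D) : B x y = 0 :=
  (h.2.2 x).1 hx y hy

lemma disjoint (h : IsDupin D E) : Disjoint D E :=
  Submodule.disjoint_def.2 fun _ hD hE => h.1.eq_zero_of_forall_B_eq_zero hD fun _ => h.B_eq_zero hE

lemma sup_eq_top (h : IsDupin D E) : D ⊔ E = ⊤ := by
  apply Submodule.eq_top_of_finrank_eq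
  have hdim := Submodule.finrank_sup_add_finrank_inf_eq D E
  rw [h.disjoint.eq_bot, finrank_bot, add_zero, h.1.finrank_eq, h.2.1.finrank_eq] at hdim
  rw [hdim, finrank_fin_fun]

lemma mem_of_le_pPerp (h : IsDupin D E) {x : V6} (hx : E ≤ pPerp x) : x ∈ D := by
  obtain ⟨d, hd, e, he, rfl⟩ := Submodule.mem_sup.1 (h.sup_eq_top ▸ Submodule.mem_top : x ∈ D ⊔ E)
  have he0 : e = 0 := h.2.1.eq_zero_of_forall_B_eq_zero he fun y hy => by
    have hxy : B y (d + e) = 0 := hx hy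
    rw [show e = d + e - d by abel, B_sub_left, B_symm, hxy, B_symm, h.B_eq_zero hy hd, sub_zero]
  rwa [he0, add_zero]

end IsDupin

lemma sup_inf_eq_left_of_le_of_disjoint {α : Type*} [Lattice α] [OrderBot α] [IsModularLattice α]
    {s p e : α} (hs : s ≤ e) (hp : Disjoint p e) : (s ⊔ p) ⊓ e = s := by
  rw [sup_inf_assoc_of_le p hs, hp.eq_bot, sup_bot_eq]

lemma Submodule.sup_eq_of_disjoint_of_finrank_add_eq {K V : Type*} [DivisionRing K]
    [AddCommGroup V] [Module K V] [FiniteDimensional K V] {p q r : Submodule K V}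
    (hp : p ≤ r) (hq : q ≤ r) (hpq : Disjoint p q) (hdim : finrank K p + finrank K q = finrank K r) :
    p ⊔ q = r := by
  refine Submodule.eq_of_le_of_finrank_eq (sup_le hp hq) ?_
  rw [← hdim, ← Submodule.finrank_sup_add_finrank_inf_eq, hpq.eq_bot, finrank_bot, add_zero]

namespace IsFaceCyclideCongruence

variable {f D E : ℤ × ℤ → Submodule ℝ V6}

lemma inf_right_eq_sMinus (hf : IsLegendre f) (hC : IsFaceCyclideCongruence f D E) (m n : ℤ) :
    f (m, n + 1) ⊓ E (m, n) = sMinus f m n := by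
  obtain ⟨hDup, -, hP, hM, -⟩ := hC m n
  have hsplit : sMinus f m n ⊔ sPlus f m (n + 1) = f (m, n + 1) :=
    Submodule.sup_eq_of_disjoint_of_finrank_add_eq inf_le_right inf_le_left
      (hDup.disjoint.mono hP hM).symm (by rw [hf.2.2, hf.2.1, (hf.1 _).1])
  rw [← hsplit]
  exact sup_inf_eq_left_of_le_of_disjoint hM (hDup.disjoint.mono_left hP)

lemma inf_left_eq_sPlus (hf : IsLegendre f) (hC : IsFaceCyclideCongruence f D E) (m n : ℤ) :
    f (m + 1, n) ⊓ D (m, n) = sPlus f m n := by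
  obtain ⟨hDup, hP, -, -, hM⟩ := hC m n
  have hsplit : sPlus f m n ⊔ sMinus f (m + 1) n = f (m + 1, n) :=
    Submodule.sup_eq_of_disjoint_of_finrank_add_eq inf_le_right inf_le_left
      (hDup.disjoint.mono hP hM) (by rw [hf.2.1, hf.2.2, (hf.1 _).1])
  rw [← hsplit]
  exact sup_inf_eq_left_of_le_of_disjoint hP (hDup.disjoint.symm.mono_left hM)

lemma sMinus_le_pPerp (hC : IsFaceCyclideCongruence f D E) {m n : ℤ} {x : V6}
    (hx : x ∈ sPlus f m n) : sMinus f m n ≤ pPerp x :=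
  fun _ hy => (hC m n).1.B_eq_zero ((hC m n).2.2.2.1 hy) ((hC m n).2.1 hx)

end IsFaceCyclideCongruence

section Channel

variable {f : ℤ × ℤ → Submodule ℝ V6}

lemma IsChannelPlus.sPlus_add_one (h : IsChannelPlus f) (m n : ℤ) :
    sPlus f (m + 1) n = sPlus f m n := by
  obtain ⟨hf, D, E, hC, hconst⟩ := h
  refine Submodule.eq_of_le_of_finrank_eq ?_ (by rw [hf.2.1, hf.2.1])
  rw [← hC.inf_left_eq_sPlus hf m n, (hconst m (m + 1) n).1]
  exact le_inf inf_le_left (hC (m + 1) n).2.1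

lemma IsChannelMinus.sMinus_add_one (h : IsChannelMinus f) (m n : ℤ) :
    sMinus f m (n + 1) = sMinus f m n := by
  obtain ⟨hf, D, E, hC, hconst⟩ := h
  refine Submodule.eq_of_le_of_finrank_eq ?_ (by rw [hf.2.2, hf.2.2])
  rw [← hC.inf_right_eq_sMinus hf m n, (hconst m n (n + 1)).2]
  exact le_inf inf_le_left (hC m (n + 1)).2.2.2.1

lemma IsChannelPlus.sPlus_eq (h : IsChannelPlus f) (m n : ℤ) : sPlus f m n = sPlus f 0 n := by
  simpa using Function.Periodic.int_mul_eq (f := (sPlus f · n)) (c := 1) (h.sPlus_add_one · n) m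

lemma IsChannelMinus.sMinus_eq (h : IsChannelMinus f) (m n : ℤ) : sMinus f m n = sMinus f m 0 := by
  simpa using Function.Periodic.int_mul_eq (f := sMinus f m) (c := 1) (h.sMinus_add_one m) n

end Channel

/-- The two curvature sphere congruences of a discrete Dupin cyclide lie in
two fixed orthogonal `(2,1)`-planes, and its Lie cyclide congruence is constant. -/
theorem discrete_dupin_cyclide_constant_lie_cyclide
    (f : ℤ × ℤ → Submodule ℝ V6) (hf : IsDiscreteDupin f)
    (hdim : ∀ n : ℤ, Module.finrank ℝ ↥(⨆ m : ℤ, sMinus f m n) = 3) :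
    ∃ D E : Submodule ℝ V6, IsDupin D E ∧
      (∀ m n : ℤ, sPlus f m n ≤ D ∧ sMinus f m n ≤ E) ∧
      IsFaceCyclideCongruence f (fun _ => D) (fun _ => E) := by
  obtain ⟨hplus, hminus⟩ := hf
  obtain ⟨D, E, hC, hconst⟩ := hplus.2
  have hDup : IsDupin (D (0, 0)) (E (0, 0)) := (hC 0 0).1
  have hE : ∀ m n, sMinus f m n ≤ E (0, 0) := fun m n => by
    rw [hminus.sMinus_eq m n, ← (hconst m 0 0).2]
    exact (hC m 0).2.2.2.1
  have hEsup : ∀ n, ⨆ m, sMinus f m n = E (0, 0) := fun n =>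
    Submodule.eq_of_le_of_finrank_eq (iSup_le (hE · n)) (by rw [hdim n, hDup.2.1.finrank_eq])
  have hD : ∀ m n, sPlus f m n ≤ D (0, 0) := fun m n x hx =>
    hDup.mem_of_le_pPerp <| hEsup n ▸ iSup_le fun m' =>
      hC.sMinus_le_pPerp (by rwa [hplus.sPlus_eq m' n, ← hplus.sPlus_eq m n])
  exact ⟨D (0, 0), E (0, 0), hDup, fun m n => ⟨hD m n, hE m n⟩,
    fun m n => ⟨hDup, hD m n, hD m (n + 1), hE m n, hE (m + 1) n⟩⟩
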